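/- A finite word W is a rich palindrome if and only if P_W(n) + P_W(n+1) = C_W(n+1) - C_W(n) + 2 for each 0 ≤ n ≤ |W|. -/

import Mathlib

open List

variable {α : Type*} [DecidableEq α]

/-- The set of factors (contiguous subwords) of `W`. -/
def factorFinset (W : List α) : Finset (List α) := (W.inits.flatMap List.tails).toFinset

/-- A palindrome is a word equal to its reversal. -/
def Pal (u : List α) : Prop := u.reverse = u

instance : DecidablePred (Pal : List α → Prop) :=
  fun u => inferInstanceAs (Decidable (u.reverse = u))

/-- The set of palindromic factors of `W` (including the empty word). -/
def palFactorFinset (W : List α) : Finset (List α) := (factorFinset W).filter Pal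

/-- Subword complexity: the number of distinct factors of `W` of length `n`. -/
def C (W : List α) (n : ℕ) : ℕ := ((factorFinset W).filter (fun u => u.length = n)).card

/-- Palindromic complexity: number of distinct palindromic factors of `W` of length `n`. -/
def P (W : List α) (n : ℕ) : ℕ := ((palFactorFinset W).filter (fun u => u.length = n)).card

/-- A word is rich if it has exactly `|W| + 1` distinct palindromic factors. -/
def Rich (W : List α) : Prop := (palFactorFinset W).card = W.length + 1

/-- Number of occurrences of `u` as a factor of `W`. -/
def occ (u W : List α) : ℕ := ((List.range (W.length + 1)).filter (fun i => u <+: W.drop i)).length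

/-- `Z` is a complete return to `u` in `W`: a factor of `W` with exactly two
occurrences of `u`, one as a prefix and one as a suffix. -/
def CompleteReturn (u Z W : List α) : Prop := Z <:+: W ∧ u <+: Z ∧ u <:+ Z ∧ occ u Z = 2

/-- `u` is a right special factor of `W`. -/
def RightSpecial (u W : List α) : Prop :=
  ∃ x y : α, x ≠ y ∧ (u ++ [x]) <:+: W ∧ (u ++ [y]) <:+: W

/-- `R_W`: the smallest `p` such that `W` has no right special factor of length `p`. -/
noncomputable def RW (W : List α) : ℕ := sInf {p : ℕ | ∀ u : List α, u.length = p → ¬ RightSpecial u W}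

/-- `K_W`: the length of the shortest suffix of `W` occurring exactly once in `W`. -/
noncomputable def KW (W : List α) : ℕ := sInf {k : ℕ | ∃ u : List α, u <:+ W ∧ u.length = k ∧ occ u W = 1}

/-- A word is trapezoidal if `|W| = R_W + K_W`. -/
def Trapezoidal (W : List α) : Prop := W.length = RW W + KW W

/-- The minimal period of `W`. -/
noncomputable def minPeriod (W : List α) : ℕ :=
  sInf {q : ℕ | 0 < q ∧ ∀ i : ℕ, i + q < W.length → W[i]? = W[i + q]?}

/-- A binary word is balanced if the number of occurrences of a letter in two
factors of equal length differ by at most 1. -/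
def BalancedWord (W : List Bool) : Prop :=
  ∀ u v : List Bool, u <:+: W → v <:+: W → u.length = v.length →
    u.count true ≤ v.count true + 1


/-!
The factors of `W` of lengths `n` and `n + 1` are the vertices and edges of its Rauzy graph,
traversed by the walk of consecutive windows of `W`. When `W` is a palindrome, reversal maps
this graph to itself and reverses the walk; peeling off the first and last edges of the walk
gives `P(n) + P(n+1) ≤ C(n+1) - C(n) + 2` for `n < |W|`. For every word the gaps
`C(n+1) - C(n) + 2 - P(n) - P(n+1)`, summed over `n ≤ |W|`, telescope to twice
`|W| + 1 - #{palindromic factors}`, so for a palindrome all gaps vanish exactly when `W` is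
rich. Conversely, the gap at `n = |W|` is `1 - P(|W|)`, which vanishes only for palindromes.
-/

open Finset

section SymmetricWalk

variable {S T : Type*} [DecidableEq S] [DecidableEq T]

theorem card_filter_add_card_le_of_subset (p : T → Prop) [DecidablePred p] {X Y : Finset T}
    (h : X ⊆ Y) : (Y.filter p).card + X.card ≤ (X.filter p).card + Y.card := by
  have hsub : Y.filter p ⊆ X.filter p ∪ (Y \ X) := by
    intro z hz
    by_cases hzX : z ∈ X <;> simp_all
  have := (card_le_card hsub).trans (card_union_le _ _)
  have := card_le_card h
  rw [card_sdiff_of_subset h] at *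
  omega

theorem card_add_card_filter_fixed_insert_insert_le (σ : S → S) {x y : S} (hxy : σ x = y)
    (hyx : σ y = x) (X : Finset S) :
    (insert x (insert y X)).card + ((insert x (insert y X)).filter (fun z => σ z = z)).card
      ≤ X.card + (X.filter (fun z => σ z = z)).card + 2 := by
  by_cases hxy' : x = y
  · subst hxy'
    rw [insert_idem, filter_insert, if_pos hxy]
    have := card_insert_le x X
    have := card_insert_le x (X.filter (fun z => σ z = z))
    omega
  · rw [filter_insert, if_neg (by rw [hxy]; exact Ne.symm hxy'), filter_insert,
      if_neg (by rw [hyx]; exact hxy')]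
    have := card_insert_le x (insert y X)
    have := card_insert_le y X
    omega

theorem card_add_card_filter_fixed_le_of_extend (σS : S → S) (σT : T → T) (src tgt : T → S)
    {V : Finset S} {E : Finset T} {x y : S} {a b : T}
    (hV : ∀ z ∈ V, σS z ∈ V) (hE : ∀ c ∈ E, src c ∈ V ∧ tgt c ∈ V)
    (hxy : σS x = y) (hyx : σS y = x) (hab : σT a = b) (hba : σT b = a)
    (ha : src a = x) (hb : tgt b = y) (hbV : src b ∈ V)
    (hVE : V.card + (V.filter (fun z => σS z = z)).card + (E.filter (fun c => σT c = c)).card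
      ≤ E.card + 2) :
    (insert x (insert y V)).card + ((insert x (insert y V)).filter (fun z => σS z = z)).card
      + ((insert a (insert b E)).filter (fun c => σT c = c)).card
      ≤ (insert a (insert b E)).card + 2 := by
  by_cases hx : x ∈ V
  · have hy : y ∈ V := hxy ▸ hV x hx
    rw [insert_eq_of_mem hy, insert_eq_of_mem hx]
    have := card_filter_add_card_le_of_subset (fun c => σT c = c)
      ((subset_insert b E).trans (subset_insert a _))
    omega
  · have hy : y ∉ V := fun hy => hx (hyx ▸ hV y hy)
    have haE : a ∉ E := fun h => hx (ha ▸ (hE a h).1)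
    have hbE : b ∉ E := fun h => hy (hb ▸ (hE b h).2)
    have hab' : a ≠ b := fun h => hx (ha ▸ h ▸ hbV)
    have hcard : (insert a (insert b E)).card = E.card + 2 := by
      rw [card_insert_of_notMem (by simp [hab', haE]), card_insert_of_notMem hbE]
    have hfix : (insert a (insert b E)).filter (fun c => σT c = c)
        = E.filter (fun c => σT c = c) := by
      rw [filter_insert, if_neg (by rw [hab]; exact hab'.symm), filter_insert,
        if_neg (by rw [hba]; exact hab')]
    have := card_add_card_filter_fixed_insert_insert_le σS hxy hyx V
    rw [hcard, hfix]
    omega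

theorem image_range_add_two {β : Type*} [DecidableEq β] (f : ℕ → β) (k : ℕ) :
    (Finset.range (k + 2)).image f
      = insert (f 0) (insert (f (k + 1)) ((Finset.range k).image (fun i => f (i + 1)))) := by
  rw [range_add_one, image_insert, range_add_one', image_insert, map_eq_image, image_image,
    insert_comm]
  rfl

theorem card_add_card_filter_fixed_le_of_symmetric_walk (σS : S → S) (σT : T → T)
    (src tgt : T → S) (m : ℕ) (v : ℕ → S) (e : ℕ → T)
    (hsrc : ∀ i < m, src (e i) = v i) (htgt : ∀ i < m, tgt (e i) = v (i + 1))
    (hv : ∀ i j, i + j = m → σS (v i) = v j)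
    (he : ∀ i j, i + j + 1 = m → σT (e i) = e j) :
    ((Finset.range (m + 1)).image v).card
      + (((Finset.range (m + 1)).image v).filter (fun z => σS z = z)).card
      + (((Finset.range m).image e).filter (fun c => σT c = c)).card
      ≤ ((Finset.range m).image e).card + 2 := by
  induction m using Nat.strong_induction_on generalizing v e with
  | _ m ih =>
  rcases m with _ | _ | k
  · have := card_filter_le ({v 0} : Finset S) (fun z => σS z = z)
    simp only [zero_add, Finset.range_one, image_singleton, Finset.range_zero, image_empty,
      filter_empty, card_empty, card_singleton] at this ⊢
    omega
  · have := card_add_card_filter_fixed_insert_insert_le σS (hv 0 1 rfl) (hv 1 0 rfl) ∅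
    have := card_filter_le ({e 0} : Finset T) (fun c => σT c = c)
    rw [image_range_add_two v 0, Finset.range_zero, image_empty]
    simp only [zero_add, Finset.range_one, image_singleton, card_singleton, filter_empty,
      card_empty] at *
    omega
  · have hmem : ∀ i ≤ k, v (i + 1) ∈ (Finset.range (k + 1)).image (fun i => v (i + 1)) :=
      fun i hi => mem_image_of_mem _ (Finset.mem_range.mpr (by omega))
    rw [image_range_add_two v (k + 1), image_range_add_two e k]
    refine card_add_card_filter_fixed_le_of_extend σS σT src tgt ?_ ?_
      (hv 0 (k + 2) (by omega)) (hv (k + 2) 0 (by omega))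
      (he 0 (k + 1) (by omega)) (he (k + 1) 0 (by omega))
      (hsrc 0 (by omega)) (htgt (k + 1) (by omega)) (hsrc (k + 1) (by omega) ▸ hmem k le_rfl)
      (ih k (by omega) (fun i => v (i + 1)) (fun i => e (i + 1))
        (fun i _ => hsrc (i + 1) (by omega)) (fun i _ => htgt (i + 1) (by omega))
        (fun i j _ => hv (i + 1) (j + 1) (by omega)) (fun i j _ => he (i + 1) (j + 1) (by omega)))
    · intro z hz
      obtain ⟨i, hi, rfl⟩ := mem_image.mp hz
      rw [Finset.mem_range] at hi
      exact hv (i + 1) (k - i + 1) (by omega) ▸ hmem (k - i) (by omega)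
    · intro z hz
      obtain ⟨i, hi, rfl⟩ := mem_image.mp hz
      rw [Finset.mem_range] at hi
      exact ⟨hsrc (i + 1) (by omega) ▸ hmem i (by omega),
        htgt (i + 1) (by omega) ▸ hmem (i + 1) (by omega)⟩

end SymmetricWalk

theorem mem_factorFinset {u W : List α} : u ∈ factorFinset W ↔ u <:+: W := by
  simp only [factorFinset, List.mem_toFinset, List.mem_flatMap, List.mem_inits, List.mem_tails]
  constructor
  · rintro ⟨t, ht, hu⟩
    exact hu.isInfix.trans ht.isInfix
  · rintro ⟨s, t, rfl⟩
    exact ⟨s ++ u, ⟨t, by simp⟩, ⟨s, rfl⟩⟩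

theorem filter_length_factorFinset (W : List α) {n : ℕ} (hn : n ≤ W.length) :
    (factorFinset W).filter (fun u => u.length = n)
      = (Finset.range (W.length - n + 1)).image (fun i => (W.drop i).take n) := by
  ext u
  simp only [Finset.mem_filter, Finset.mem_image, Finset.mem_range, mem_factorFinset]
  constructor
  · rintro ⟨⟨s, t, rfl⟩, rfl⟩
    exact ⟨s.length, by simp; omega, by simp⟩
  · rintro ⟨i, hi, rfl⟩
    exact ⟨(List.take_prefix _ _).isInfix.trans (List.drop_suffix _ _).isInfix, by simp; omega⟩

theorem filter_length_factorFinset_of_lt (W : List α) {n : ℕ} (hn : W.length < n) :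
    (factorFinset W).filter (fun u => u.length = n) = ∅ :=
  filter_eq_empty_iff.mpr fun u hu hlen =>
    absurd (mem_factorFinset.mp hu).length_le (by omega)

theorem filter_length_self_factorFinset (W : List α) :
    (factorFinset W).filter (fun u => u.length = W.length) = {W} := by
  rw [filter_length_factorFinset W le_rfl, Nat.sub_self, Finset.range_one, image_singleton]
  simp

theorem filter_length_zero_factorFinset (W : List α) :
    (factorFinset W).filter (fun u => u.length = 0) = {[]} := by
  rw [filter_length_factorFinset W (Nat.zero_le _)]
  simp only [List.take_zero]
  exact image_const nonempty_range_add_one []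

theorem P_eq_card_filter_reverse_eq (W : List α) (n : ℕ) :
    P W n = (((factorFinset W).filter (fun u => u.length = n)).filter
      (fun u => u.reverse = u)).card := by
  rw [P, palFactorFinset, Finset.filter_comm]
  rfl

theorem C_zero (W : List α) : C W 0 = 1 := by
  rw [C, filter_length_zero_factorFinset, card_singleton]

theorem P_zero (W : List α) : P W 0 = 1 := by
  rw [P_eq_card_filter_reverse_eq, filter_length_zero_factorFinset, Finset.filter_singleton,
    if_pos List.reverse_nil, card_singleton]

theorem C_length (W : List α) : C W W.length = 1 := by
  rw [C, filter_length_self_factorFinset, card_singleton]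

theorem P_length (W : List α) : P W W.length = if Pal W then 1 else 0 := by
  rw [P_eq_card_filter_reverse_eq, filter_length_self_factorFinset, Finset.filter_singleton]
  by_cases h : W.reverse = W <;> simp [Pal, h]

theorem C_of_length_lt (W : List α) {n : ℕ} (hn : W.length < n) : C W n = 0 := by
  rw [C, filter_length_factorFinset_of_lt W hn, card_empty]

theorem P_of_length_lt (W : List α) {n : ℕ} (hn : W.length < n) : P W n = 0 := by
  rw [P_eq_card_filter_reverse_eq, filter_length_factorFinset_of_lt W hn, filter_empty,
    card_empty]

theorem reverse_take_drop_of_pal {β : Type*} {W : List β} (hW : Pal W)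
    {i n j : ℕ} (h : i + n + j = W.length) :
    ((W.drop i).take n).reverse = (W.drop j).take n := by
  rw [List.reverse_take, List.length_drop, List.reverse_drop, show W.reverse = W from hW,
    List.drop_take, show W.length - i - n = j by omega, show W.length - i - j = n by omega]

theorem P_add_P_add_C_le_of_pal {W : List α} (hW : Pal W) {n : ℕ} (hn : n < W.length) :
    P W n + P W (n + 1) + C W n ≤ C W (n + 1) + 2 := by
  have key := card_add_card_filter_fixed_le_of_symmetric_walk List.reverse List.reverse
    (List.take n) (List.drop 1) (W.length - n) (fun i => (W.drop i).take n)
    (fun i => (W.drop i).take (n + 1)) (fun i _ => by simp [List.take_take])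
    (fun i _ => by simp [List.drop_take, List.drop_drop])
    (fun i j h => reverse_take_drop_of_pal hW (by omega))
    (fun i j h => reverse_take_drop_of_pal hW (by omega))
  rw [P_eq_card_filter_reverse_eq, P_eq_card_filter_reverse_eq, C, C,
    filter_length_factorFinset W hn.le, filter_length_factorFinset W (n := n + 1) hn,
    show W.length - (n + 1) + 1 = W.length - n by omega]
  omega

def complexityGap (W : List α) (n : ℕ) : ℤ := C W (n + 1) - C W n + 2 - P W n - P W (n + 1)

theorem card_palFactorFinset_eq_sum (W : List α) :
    (palFactorFinset W).card = ∑ n ∈ Finset.range (W.length + 2), P W n :=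
  card_eq_sum_card_fiberwise fun _ hu => Finset.mem_range.mpr <|
    Nat.lt_add_right 1 <| Nat.lt_succ_of_le
      (mem_factorFinset.mp (Finset.mem_filter.mp hu).1).length_le

theorem sum_complexityGap (W : List α) :
    ∑ n ∈ Finset.range (W.length + 1), complexityGap W n
      = 2 * ((W.length : ℤ) + 1 - (palFactorFinset W).card) := by
  have hC := Finset.sum_range_sub (fun n => (C W n : ℤ)) (W.length + 1)
  have hP : ((palFactorFinset W).card : ℤ)
      = ∑ n ∈ Finset.range (W.length + 2), (P W n : ℤ) := by
    exact_mod_cast card_palFactorFinset_eq_sum W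
  have hP' := hP
  rw [Finset.sum_range_succ] at hP
  rw [Finset.sum_range_succ'] at hP'
  rw [Finset.sum_sub_distrib] at hC
  simp only [complexityGap, Finset.sum_sub_distrib, Finset.sum_add_distrib, Finset.sum_const,
    Finset.card_range, nsmul_eq_mul]
  rw [C_of_length_lt W (lt_add_one _), C_zero] at hC
  rw [P_of_length_lt W (lt_add_one _)] at hP
  rw [P_zero] at hP'
  push_cast at hC hP hP' ⊢
  linarith

theorem complexityGap_length_eq_zero_iff (W : List α) :
    complexityGap W W.length = 0 ↔ Pal W := by
  rw [complexityGap, C_length, C_of_length_lt W (lt_add_one _), P_length,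
    P_of_length_lt W (lt_add_one _)]
  split_ifs with h <;> simp [h]

theorem complexityGap_nonneg_of_pal {W : List α} (hW : Pal W) {n : ℕ} (hn : n ≤ W.length) :
    0 ≤ complexityGap W n := by
  rcases hn.lt_or_eq with h | rfl
  · have := P_add_P_add_C_le_of_pal hW h
    rw [complexityGap]
    omega
  · exact ((complexityGap_length_eq_zero_iff W).mpr hW).ge

theorem stmt8 {α : Type*} [DecidableEq α] (W : List α) :
    (Rich W ∧ Pal W) ↔
      ∀ n : ℕ, n ≤ W.length →
        (P W n + P W (n + 1) : ℤ) = (C W (n + 1) : ℤ) - C W n + 2 := by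
  have hsum := sum_complexityGap W
  constructor
  · rintro ⟨hrich, hpal⟩ n hn
    have hzero := (Finset.sum_eq_zero_iff_of_nonneg fun k hk =>
      complexityGap_nonneg_of_pal hpal (Nat.lt_succ_iff.mp (Finset.mem_range.mp hk))).mp
        (by rw [hsum, show (palFactorFinset W).card = W.length + 1 from hrich]; push_cast; ring)
    have := hzero n (Finset.mem_range.mpr (Nat.lt_succ_of_le hn))
    rw [complexityGap] at this
    linarith
  · intro h
    have hzero : ∀ n ≤ W.length, complexityGap W n = 0 := fun n hn => by
      rw [complexityGap]
      linarith [h n hn]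
    refine ⟨?_, (complexityGap_length_eq_zero_iff W).mp (hzero _ le_rfl)⟩
    rw [sum_eq_zero fun n hn => hzero n (Nat.lt_succ_iff.mp (Finset.mem_range.mp hn))] at hsum
    rw [Rich]
    omega
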